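/- arXiv:1003.3436 — 7 statements merged into one kernel-verified Lean document; each statement's English description precedes it below -/
import Mathlib

section
/- For 2×2 hermitian quaternionic matrices A, B, the symmetric bilinear form g(A,B) = (1/2) Re tr(A·B̃) satisfies g(A,A) = -det₀(A), recovering the Minkowski metric of signature (5,1) on the 6-dimensional real space of such matrices. -/
/-!
`Re (p * q) = Re (q * p)` in `ℍ`, so `Re tr` is cyclic on quaternionic matrices even though `tr`
is not. Since `g(A, B) = ½ (Re tr (A B) - Re (tr A · tr B))`, this makes `g` symmetric. For
`A = (t+x, y; y*, t-x)` one has `tr A = 2t` and `Re tr A² = (t+x)² + (t-x)² + 2|y|²`.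
-/

/-- The 2×2 hermitian quaternionic matrix `(t+x, y; y*, t-x)`. -/
noncomputable def qherm (t x : ℝ) (y : Quaternion ℝ) : Matrix (Fin 2) (Fin 2) (Quaternion ℝ) :=
  !![((t + x : ℝ) : Quaternion ℝ), y; star y, ((t - x : ℝ) : Quaternion ℝ)]

/-- Trace reversal `Ã = A - (tr A)·1`. -/
noncomputable def qtilde (M : Matrix (Fin 2) (Fin 2) (Quaternion ℝ)) :
    Matrix (Fin 2) (Fin 2) (Quaternion ℝ) :=
  M - (Matrix.trace M) • (1 : Matrix (Fin 2) (Fin 2) (Quaternion ℝ))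

/-- The Minkowski metric `g(A,B) = (1/2) Re tr(A B̃)` on `h₂(ℍ)`. -/
noncomputable def gMink (A B : Matrix (Fin 2) (Fin 2) (Quaternion ℝ)) : ℝ :=
  (1 / 2) * ((A * qtilde B).trace).re

theorem Quaternion.re_mul_comm {R : Type*} [CommRing R] (a b : Quaternion R) :
    (a * b).re = (b * a).re := by
  simp only [Quaternion.re_mul]
  ring

theorem Quaternion.re_sum {ι R : Type*} [CommRing R] (s : Finset ι) (f : ι → Quaternion R) :
    (∑ i ∈ s, f i).re = ∑ i ∈ s, (f i).re :=
  map_sum (QuaternionAlgebra.reₗ _ _ _) f s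

theorem Matrix.re_trace_mul_comm {m n R : Type*} [Fintype m] [Fintype n] [CommRing R]
    (A : Matrix m n (Quaternion R)) (B : Matrix n m (Quaternion R)) :
    (A * B).trace.re = (B * A).trace.re := by
  simp only [Matrix.trace, Matrix.diag_apply, Matrix.mul_apply, Quaternion.re_sum]
  rw [Finset.sum_comm]
  simp only [Quaternion.re_mul_comm]

theorem Matrix.trace_mul_smul_one {n R : Type*} [Fintype n] [DecidableEq n] [Semiring R]
    (A : Matrix n n R) (c : R) : (A * c • (1 : Matrix n n R)).trace = A.trace * c := by
  simp [Matrix.trace, Matrix.mul_apply, Matrix.one_apply, Finset.sum_mul]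

theorem gMink_eq_re_trace_mul_sub (A B : Matrix (Fin 2) (Fin 2) (Quaternion ℝ)) :
    gMink A B = (1 / 2) * ((A * B).trace.re - (A.trace * B.trace).re) := by
  rw [gMink, qtilde, Matrix.mul_sub, Matrix.trace_sub, Matrix.trace_mul_smul_one,
    Quaternion.re_sub]

theorem gMink_comm (A B : Matrix (Fin 2) (Fin 2) (Quaternion ℝ)) : gMink A B = gMink B A := by
  rw [gMink_eq_re_trace_mul_sub, gMink_eq_re_trace_mul_sub, Matrix.re_trace_mul_comm,
    Quaternion.re_mul_comm]

theorem trace_qherm (t x : ℝ) (y : Quaternion ℝ) :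
    (qherm t x y).trace = ((2 * t : ℝ) : Quaternion ℝ) := by
  rw [qherm, Matrix.trace_fin_two_of, ← Quaternion.coe_add]
  congr 1
  ring

theorem re_trace_qherm_mul_self (t x : ℝ) (y : Quaternion ℝ) :
    (qherm t x y * qherm t x y).trace.re = (t + x) ^ 2 + (t - x) ^ 2 + 2 * (y * star y).re := by
  simp [qherm, Matrix.trace_fin_two, Quaternion.re_mul_comm (star y) y]
  ring

/-- The bilinear form `g(A,B) = (1/2) Re tr(A B̃)` on 2×2 hermitian quaternionic
matrices is symmetric and satisfies `g(A,A) = -det₀(A) = -(t² - x² - |y|²)`, the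
Minkowski metric of signature (5,1). -/
theorem gMink_symm_and_eq_neg_det :
    (∀ A B : Matrix (Fin 2) (Fin 2) (Quaternion ℝ),
      A.IsHermitian → B.IsHermitian → gMink A B = gMink B A) ∧
    (∀ (t x : ℝ) (y : Quaternion ℝ),
      gMink (qherm t x y) (qherm t x y) = -(t ^ 2 - x ^ 2 - (y * star y).re)) := by
  refine ⟨fun A B _ _ => gMink_comm A B, fun t x y => ?_⟩
  rw [gMink_eq_re_trace_mul_sub, re_trace_qherm_mul_self, trace_qherm, ← Quaternion.coe_mul,
    Quaternion.re_coe]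
  ring
end

section
/- The map Γ: h₂(ℍ) → End(ℍ² ⊕ ℍ²) defined by Γ(A)(ψ, φ) = (Ã φ, A ψ) satisfies the Clifford relation Γ(A)² = g(A,A)·1, where g(A,A) = -det₀(A). -/
open Matrix

/-!
Trace reversal of `A = qherm t x y` flips the sign of `t`, and `qherm (-t) x y * qherm t x y` is
the real scalar `x² + |y|² - t² = g(A,A)`: the off-diagonal entries cancel because real scalars are
central in `ℍ`, and the diagonal ones only involve `y y* = y* y = |y|²`. Replacing `t` by `-t`
gives the same scalar for the product in the other order, so both components of `Γ(A)²` act as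
multiplication by `g(A,A)`.
-/

theorem qtilde_qherm (t x : ℝ) (y : Quaternion ℝ) : qtilde (qherm t x y) = qherm (-t) x y := by
  rw [qtilde, qherm, qherm, trace_fin_two, one_fin_two]
  refine Matrix.ext fun i j => ?_
  fin_cases i <;> fin_cases j <;>
    simp only [Fin.zero_eta, Fin.mk_one, Fin.isValue, of_apply, cons_val', cons_val_zero,
      cons_val_one, cons_val_fin_one, Matrix.sub_apply, Matrix.smul_apply, smul_eq_mul, mul_one,
      mul_zero, sub_zero]
  all_goals push_cast; abel

theorem qherm_neg_mul_qherm (t x : ℝ) (y : Quaternion ℝ) :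
    qherm (-t) x y * qherm t x y = (-(t ^ 2 - x ^ 2 - Quaternion.normSq y)) • 1 := by
  rw [qherm, qherm, mul_fin_two, one_fin_two]
  refine Matrix.ext fun i j => ?_
  fin_cases i <;> fin_cases j <;>
    simp only [Fin.zero_eta, Fin.mk_one, Fin.isValue, of_apply, cons_val', cons_val_zero,
      cons_val_one, cons_val_fin_one, Matrix.smul_apply, smul_zero, Quaternion.self_mul_star,
      Quaternion.star_mul_self]
  · rw [← Quaternion.coe_mul, ← Quaternion.coe_add, ← Quaternion.coe_mul_eq_smul, mul_one]
    congr 1; ring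
  · rw [Quaternion.coe_commutes, ← mul_add, ← Quaternion.coe_add]
    simp
  · rw [← Quaternion.coe_commutes, ← add_mul, ← Quaternion.coe_add]
    simp
  · rw [← Quaternion.coe_mul, ← Quaternion.coe_add, ← Quaternion.coe_mul_eq_smul, mul_one]
    congr 1; ring

theorem qherm_mul_qherm_neg (t x : ℝ) (y : Quaternion ℝ) :
    qherm t x y * qherm (-t) x y = (-(t ^ 2 - x ^ 2 - Quaternion.normSq y)) • 1 := by
  simpa using qherm_neg_mul_qherm (-t) x y

/-- The map `Γ(A)(ψ, φ) = (Ã φ, A ψ)` on `ℍ² ⊕ ℍ²` satisfies the Clifford relation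
`Γ(A)² = g(A,A)·1` with `g(A,A) = -det₀(A)`: explicitly, `Ã (A ψ) = g(A,A) ψ` and
`A (Ã φ) = g(A,A) φ`. -/
theorem clifford_relation_dim6 (t x : ℝ) (y : Quaternion ℝ) (ψ φ : Fin 2 → Quaternion ℝ) :
    qtilde (qherm t x y) *ᵥ (qherm t x y *ᵥ ψ) =
      (-(t ^ 2 - x ^ 2 - (y * star y).re)) • ψ ∧
    qherm t x y *ᵥ (qtilde (qherm t x y) *ᵥ φ) =
      (-(t ^ 2 - x ^ 2 - (y * star y).re)) • φ := by
  have hre : (y * star y).re = Quaternion.normSq y := by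
    rw [Quaternion.self_mul_star, Quaternion.re_coe]
  rw [hre, qtilde_qherm, mulVec_mulVec, mulVec_mulVec, qherm_neg_mul_qherm, qherm_mul_qherm_neg,
    smul_mulVec, smul_mulVec, one_mulVec, one_mulVec]
  exact ⟨rfl, rfl⟩
end

section
/- For ψ ∈ ℂ², with ψ·ψ = 2·((ψψ†) - tr(ψψ†)·1), one has (ψ·ψ)ψ = 0 (the 3-ψ's rule for ℂ, dimension 4). -/
open Matrix

/-- The outer product `ψφ†` of two complex 2-component spinors. -/
def couter (ψ φ : Fin 2 → ℂ) : Matrix (Fin 2) (Fin 2) ℂ :=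
  Matrix.of fun i j => ψ i * star (φ j)

/-- Trace reversal `M̃ = M - (tr M)·1`. -/
noncomputable def ctilde (M : Matrix (Fin 2) (Fin 2) ℂ) : Matrix (Fin 2) (Fin 2) ℂ :=
  M - (Matrix.trace M) • (1 : Matrix (Fin 2) (Fin 2) ℂ)

/-! Both `(u vᵀ) u` and `tr (u vᵀ) • u` equal `(v ⬝ᵥ u) • u`, so the trace-reversed outer
product `u vᵀ` annihilates `u`; for `v = ψ†` this is the 3-ψ's rule. -/

theorem vecMulVec_sub_trace_smul_one_mulVec_self {n R : Type*} [Fintype n] [DecidableEq n]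
    [CommRing R] (u v : n → R) :
    (vecMulVec u v - trace (vecMulVec u v) • (1 : Matrix n n R)) *ᵥ u = 0 := by
  rw [sub_mulVec, vecMulVec_mulVec, trace_vecMulVec, smul_mulVec, one_mulVec,
    op_smul_eq_smul, dotProduct_comm, sub_self]

theorem couter_eq_vecMulVec (ψ φ : Fin 2 → ℂ) : couter ψ φ = vecMulVec ψ (star φ) := rfl

theorem ctilde_couter_mulVec_self (ψ φ : Fin 2 → ℂ) : ctilde (couter ψ φ) *ᵥ ψ = 0 := by
  rw [ctilde, couter_eq_vecMulVec]
  exact vecMulVec_sub_trace_smul_one_mulVec_self ψ (star φ)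

/-- The 3-ψ's rule over ℂ (dimension 4): with `ψ·ψ = 2((ψψ†) - tr(ψψ†)·1)`,
the matrix `ψ·ψ` annihilates `ψ`. -/
theorem three_psis_rule_complex (ψ : Fin 2 → ℂ) :
    ((2 : ℂ) • ctilde (couter ψ ψ)) *ᵥ ψ = 0 := by
  rw [smul_mulVec, ctilde_couter_mulVec_self, smul_zero]
end

section
/- For φ ∈ ℍ², with φ·φ = 2·(φφ†) (no trace reversal), one has (φ·φ)~ φ = 0, where ~ denotes trace reversal; this is the 3-ψ's rule for negative-chirality spinors. -/
open Matrix

/-- The outer product `φφ†` of two quaternionic 2-component spinors. -/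
noncomputable def qouter (ψ φ : Fin 2 → Quaternion ℝ) : Matrix (Fin 2) (Fin 2) (Quaternion ℝ) :=
  Matrix.of fun i j => ψ i * star (φ j)

/-! The scalar `φ†φ = ∑ |φᵢ|²` is real, hence central in `ℍ`, so `(φφ†)φ = φ(φ†φ) = (φ†φ)φ`;
and `tr(φφ†) = ∑ φᵢφᵢ*` is the same real number. The two terms of `(φφ†)~φ` therefore cancel. -/

namespace Matrix

variable {n α : Type*} [Fintype n] [DecidableEq n] [Ring α]

theorem vecMulVec_sub_trace_smul_one_mulVec_self (v w : n → α)
    (hswap : w ⬝ᵥ v = v ⬝ᵥ w) (hcomm : ∀ i, Commute (v i) (v ⬝ᵥ w)) :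
    (vecMulVec v w - trace (vecMulVec v w) • 1) *ᵥ v = 0 := by
  ext i
  simp [sub_mulVec, vecMulVec_mulVec, smul_mulVec, hswap, (hcomm i).eq]

end Matrix

namespace Quaternion

variable {n R : Type*} [Fintype n] [CommRing R]

theorem star_dotProduct_self (v : n → ℍ[R]) : star v ⬝ᵥ v = ↑(∑ i, normSq (v i)) := by
  simp only [dotProduct, Pi.star_apply, star_mul_self]
  exact (map_sum (algebraMap R ℍ[R]) _ _).symm

theorem dotProduct_star_self (v : n → ℍ[R]) : v ⬝ᵥ star v = ↑(∑ i, normSq (v i)) := by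
  simp only [dotProduct, Pi.star_apply, self_mul_star]
  exact (map_sum (algebraMap R ℍ[R]) _ _).symm

end Quaternion

theorem qtilde_smul (c : ℝ) (M : Matrix (Fin 2) (Fin 2) (Quaternion ℝ)) :
    qtilde (c • M) = c • qtilde M := by
  simp [qtilde, trace_smul, smul_sub, smul_assoc]

theorem qtilde_qouter_self_mulVec_self (φ : Fin 2 → Quaternion ℝ) :
    qtilde (qouter φ φ) *ᵥ φ = 0 :=
  vecMulVec_sub_trace_smul_one_mulVec_self φ (star φ)
    (by rw [Quaternion.star_dotProduct_self, Quaternion.dotProduct_star_self])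
    (fun i => by rw [Quaternion.dotProduct_star_self]; exact (Quaternion.coe_commute _ _).symm)

/-- The 3-ψ's rule for negative-chirality spinors over ℍ: with `φ·φ = 2 φφ†`
(no trace reversal), the trace reversal `(φ·φ)~` annihilates `φ`. -/
theorem three_psis_rule_negative_chirality (φ : Fin 2 → Quaternion ℝ) :
    qtilde ((2 : ℝ) • qouter φ φ) *ᵥ φ = 0 := by
  rw [qtilde_smul, smul_mulVec, qtilde_qouter_self_mulVec_self, smul_zero]
end

section
/- The polarized 3-ψ's rule holds over the quaternions: for all ψ, φ, χ ∈ ℍ², (ψ·φ)χ + (φ·χ)ψ + (χ·ψ)φ = 0, where ψ·φ = (ψφ† + φψ†)~ denotes the trace reversal of ψφ† + φψ†. -/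
open Matrix

/-- The symmetric spinor bracket `ψ·φ = (ψφ† + φψ†)~`. -/
noncomputable def qdot (ψ φ : Fin 2 → Quaternion ℝ) : Matrix (Fin 2) (Fin 2) (Quaternion ℝ) :=
  qtilde (qouter ψ φ + qouter φ ψ)

/-!
Write `⟨φ, χ⟩ = φ†χ`. Then `(ψφ†)χ = ψ⟨φ, χ⟩`, and `tr(ψφ† + φψ†) = ⟨φ, ψ⟩ + ⟨ψ, φ⟩` is a
reduced trace `x + x̄`, hence central. So `(ψ·φ)χ = ψ⟨φ, χ⟩ + φ⟨ψ, χ⟩ - χ(⟨φ, ψ⟩ + ⟨ψ, φ⟩)`,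
and in the cyclic sum the coefficients of `ψ`, `φ` and `χ` cancel. Only the centrality of
`x + x̄` and `a b̄ + b ā = b̄ a + ā b` enter, so the rule holds for vectors of any length over any
quaternion algebra.
-/

open Quaternion MulOpposite

namespace QuaternionAlgebra

variable {R : Type*} [CommRing R] {c₁ c₂ c₃ : R}

theorem commute_self_add_star (a b : ℍ[R,c₁,c₂,c₃]) : Commute (a + star a) b := by
  rw [self_add_star']
  exact coe_commutes _ _

theorem mul_star_add_mul_star_comm (a b : ℍ[R,c₁,c₂,c₃]) :
    a * star b + b * star a = star b * a + star a * b := by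
  ext <;> simp <;> ring

end QuaternionAlgebra

section SpinorBracket

variable {n R : Type*} [Fintype n] [CommRing R] {c₁ c₂ c₃ : R}

theorem trace_vecMulVec_star_add (ψ φ : n → ℍ[R,c₁,c₂,c₃]) :
    trace (vecMulVec ψ (star φ) + vecMulVec φ (star ψ)) = star φ ⬝ᵥ ψ + star ψ ⬝ᵥ φ := by
  simp only [trace_add, trace_vecMulVec, dotProduct, ← Finset.sum_add_distrib, Pi.star_apply,
    QuaternionAlgebra.mul_star_add_mul_star_comm]

theorem commute_star_dotProduct_add (ψ φ : n → ℍ[R,c₁,c₂,c₃]) (a : ℍ[R,c₁,c₂,c₃]) :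
    Commute (star φ ⬝ᵥ ψ + star ψ ⬝ᵥ φ) a := by
  rw [star_dotProduct ψ φ]
  exact QuaternionAlgebra.commute_self_add_star _ a

variable [DecidableEq n]

def traceReversal (M : Matrix n n ℍ[R,c₁,c₂,c₃]) : Matrix n n ℍ[R,c₁,c₂,c₃] :=
  M - M.trace • 1

def spinorBracket (ψ φ : n → ℍ[R,c₁,c₂,c₃]) : Matrix n n ℍ[R,c₁,c₂,c₃] :=
  traceReversal (vecMulVec ψ (star φ) + vecMulVec φ (star ψ))

theorem spinorBracket_mulVec (ψ φ χ : n → ℍ[R,c₁,c₂,c₃]) :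
    spinorBracket ψ φ *ᵥ χ =
      op (star φ ⬝ᵥ χ) • ψ + op (star ψ ⬝ᵥ χ) • φ - op (star φ ⬝ᵥ ψ + star ψ ⬝ᵥ φ) • χ := by
  have trace_smul : (star φ ⬝ᵥ ψ + star ψ ⬝ᵥ φ) • χ = op (star φ ⬝ᵥ ψ + star ψ ⬝ᵥ φ) • χ :=
    funext fun i => commute_star_dotProduct_add ψ φ (χ i)
  rw [spinorBracket, traceReversal, trace_vecMulVec_star_add, sub_mulVec, add_mulVec,
    smul_mulVec, one_mulVec, trace_smul, vecMulVec_mulVec, vecMulVec_mulVec]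

theorem spinorBracket_mulVec_add_cyclic (ψ φ χ : n → ℍ[R,c₁,c₂,c₃]) :
    spinorBracket ψ φ *ᵥ χ + spinorBracket φ χ *ᵥ ψ + spinorBracket χ ψ *ᵥ φ = 0 := by
  simp only [spinorBracket_mulVec, op_add, add_smul]
  abel

end SpinorBracket

theorem qdot_eq_spinorBracket (ψ φ : Fin 2 → Quaternion ℝ) : qdot ψ φ = spinorBracket ψ φ :=
  rfl

/-- The polarized 3-ψ's rule over the quaternions:
`(ψ·φ)χ + (φ·χ)ψ + (χ·ψ)φ = 0`. -/
theorem polarized_three_psis_rule (ψ φ χ : Fin 2 → Quaternion ℝ) :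
    qdot ψ φ *ᵥ χ + qdot φ χ *ᵥ ψ + qdot χ ψ *ᵥ φ = 0 := by
  simp only [qdot_eq_spinorBracket]
  exact spinorBracket_mulVec_add_cyclic ψ φ χ
end

section
/- Left multiplication by elements of 𝒱 on 𝒮 = ℍ⁴ satisfies the Clifford relation: for 𝒜 ∈ 𝒱 and Ψ ∈ ℍ⁴, 𝒜(𝒜Ψ) = h(𝒜,𝒜)Ψ, despite the failure of associativity being a non-issue since ℍ is associative. -/
/-! Squaring `𝒜 = (a, Ã; A, -a)` blockwise, the off-diagonal blocks `aÃ - Ãa` and `Aa - aA`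
vanish because `a` is real, and the diagonal blocks are `a² + ÃA` and `a² + AÃ`. For
`A = (p, y; y*, q)` with `p, q` real, `Ã = (-q, y; y*, -p)`, and both products equal
`(|y|² - pq)·1 = -det₀(A)·1`: real scalars are central in `ℍ`, and `y y* = y* y = |y|²`. -/

open Matrix

/-- An element `(a·1, Ã; A, -a·1)` of the 7-dimensional Minkowski space
`𝒱 ⊆ ℍ[4]`, where `A = (t+x, y; y*, t-x) ∈ h₂(ℍ)`. -/
noncomputable def vmat (a t x : ℝ) (y : Quaternion ℝ) :
    Matrix (Fin 2 ⊕ Fin 2) (Fin 2 ⊕ Fin 2) (Quaternion ℝ) :=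
  Matrix.fromBlocks (a • 1) (qtilde (qherm t x y)) (qherm t x y) (-(a • 1))

open Quaternion

lemma qtilde_fin_two (a b c d : ℍ[ℝ]) : qtilde !![a, b; c, d] = !![-d, b; c, -a] := by
  ext i j : 1
  fin_cases i <;> fin_cases j <;> simp [qtilde, Matrix.trace_fin_two]

lemma trace_reversed_mul_hermitian_fin_two (p q : ℝ) (y : ℍ[ℝ]) :
    !![-(q : ℍ[ℝ]), y; star y, -(p : ℍ[ℝ])] * !![(p : ℍ[ℝ]), y; star y, (q : ℍ[ℝ])] =
      (normSq y - p * q) • 1 := by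
  rw [Matrix.mul_fin_two, self_mul_star, star_mul_self]
  ext i j : 1
  fin_cases i <;> fin_cases j <;>
    simp [← Algebra.algebraMap_eq_smul_one] <;> rw [coe_commutes] <;> abel

lemma hermitian_mul_trace_reversed_fin_two (p q : ℝ) (y : ℍ[ℝ]) :
    !![(p : ℍ[ℝ]), y; star y, (q : ℍ[ℝ])] * !![-(q : ℍ[ℝ]), y; star y, -(p : ℍ[ℝ])] =
      (normSq y - p * q) • 1 := by
  rw [Matrix.mul_fin_two, self_mul_star, star_mul_self]
  ext i j : 1
  fin_cases i <;> fin_cases j <;>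
    simp [← Algebra.algebraMap_eq_smul_one] <;> rw [coe_commutes] <;> abel

lemma fromBlocks_mul_self_eq_smul_one {m n R α : Type*} [Fintype m] [Fintype n] [DecidableEq m]
    [DecidableEq n] [CommSemiring R] [Ring α] [Algebra R α] (a c : R) (B : Matrix m n α)
    (C : Matrix n m α) (hBC : B * C = c • 1) (hCB : C * B = c • 1) :
    fromBlocks (a • 1) B C (-(a • 1)) * fromBlocks (a • 1) B C (-(a • 1)) = (a ^ 2 + c) • 1 := by
  rw [fromBlocks_multiply, hBC, hCB, ← fromBlocks_one, fromBlocks_smul]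
  simp [pow_two, add_smul, smul_smul, add_comm]

lemma vmat_mul_self (a t x : ℝ) (y : ℍ[ℝ]) :
    vmat a t x y * vmat a t x y = (a ^ 2 + (normSq y - (t + x) * (t - x))) • 1 := by
  rw [vmat, qherm, qtilde_fin_two]
  exact fromBlocks_mul_self_eq_smul_one _ _ _ _ (trace_reversed_mul_hermitian_fin_two _ _ y)
    (hermitian_mul_trace_reversed_fin_two _ _ y)

/-- Left multiplication by vectors `𝒜 ∈ 𝒱` on spinors `Ψ ∈ 𝒮 = ℍ⁴` satisfies the
Clifford relation `𝒜(𝒜Ψ) = h(𝒜,𝒜)Ψ`. -/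
theorem clifford_relation_dim7 (a t x : ℝ) (y : Quaternion ℝ)
    (Ψ : Fin 2 ⊕ Fin 2 → Quaternion ℝ) :
    vmat a t x y *ᵥ (vmat a t x y *ᵥ Ψ) =
      (a ^ 2 + (-(t ^ 2 - x ^ 2 - (y * star y).re))) • Ψ := by
  rw [mulVec_mulVec, vmat_mul_self, smul_mulVec, one_mulVec, self_mul_star, re_coe]
  congr 1
  ring
end

section
/- In the supertranslation Lie superalgebra 𝒯 = V ⊕ S₊ over ℍ (V = h₂(ℍ) even, S₊ = ℍ² odd, with the only nonzero bracket being the spinor bracket ψ·φ ∈ V), the even (1,2)-form α defined by α(ψ, φ, A) = g(ψ·φ, A) is a nontrivial 3-cocycle with values in the trivial representation ℝ: dα = 0 (equivalent to the 3-ψ's rule by polarization) and α ≠ dθ for any invariant 2-cochain θ. -/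
open Matrix

/-!
In coordinates, `g(ψ·φ, χ·θ) = ⟪ψ₀φ̄₁ + φ₀ψ̄₁, χ₀θ̄₁ + θ₀χ̄₁⟫ - 2(⟪ψ₁,φ₁⟫⟪χ₀,θ₀⟫ + ⟪ψ₀,φ₀⟫⟪χ₁,θ₁⟫)`.
Summed over the three pairings of `ψ, φ, χ, θ`, the twelve off-diagonal terms group into six
instances of the polarized composition law `⟪a c̄, b d̄⟫ + ⟪a d̄, b c̄⟫ = 2⟪a,b⟫⟪c,d⟫` of `ℍ`,
which cancel the six diagonal terms exactly.

A skew `ω` vanishes on the diagonal, so `dθ = α` would force `g(ψ·φ, ψ·φ) = 0` for all spinors;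
but `ψ = (1,0)`, `φ = (0,1)` give the spacelike vector `ψ·φ = [[0,1],[1,0]]` with `g(ψ·φ, ψ·φ) = 1`.
-/

open scoped Quaternion RealInnerProductSpace

lemma Quaternion.inner_mul_star_add_inner_mul_star (a b c d : ℍ) :
    ⟪a * star c, b * star d⟫ + ⟪a * star d, b * star c⟫ = 2 * ⟪a, b⟫ * ⟪c, d⟫ := by
  simp only [Quaternion.inner_def, Quaternion.re_mul, Quaternion.imI_mul, Quaternion.imJ_mul,
    Quaternion.imK_mul, Quaternion.re_star, Quaternion.imI_star, Quaternion.imJ_star,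
    Quaternion.imK_star]
  ring

lemma gMink_eq (A B : Matrix (Fin 2) (Fin 2) ℍ) :
    gMink A B = ((A 0 1 * B 1 0).re + (A 1 0 * B 0 1).re
      - (A 0 0 * B 1 1).re - (A 1 1 * B 0 0).re) / 2 := by
  simp only [gMink, qtilde, trace_fin_two, mul_apply, Fin.sum_univ_two, Matrix.sub_apply,
    Matrix.smul_apply, smul_eq_mul, one_apply_eq, one_apply_ne zero_ne_one,
    one_apply_ne one_ne_zero, mul_one, mul_zero, sub_zero, sub_add_cancel_left,
    sub_add_cancel_right, mul_neg, Quaternion.re_add, Quaternion.re_neg]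
  ring

section qdot

variable (ψ φ : Fin 2 → ℍ)

lemma qdot_eq :
    qdot ψ φ = !![-(ψ 1 * star (φ 1) + φ 1 * star (ψ 1)), ψ 0 * star (φ 1) + φ 0 * star (ψ 1);
      ψ 1 * star (φ 0) + φ 1 * star (ψ 0), -(ψ 0 * star (φ 0) + φ 0 * star (ψ 0))] := by
  refine Matrix.ext fun i j => ?_
  fin_cases i <;> fin_cases j <;> simp [qdot, qtilde, qouter, trace_fin_two]

lemma qdot_isHermitian : (qdot ψ φ).IsHermitian := by
  refine IsHermitian.ext fun i j => ?_
  fin_cases i <;> fin_cases j <;> simp [qdot_eq, add_comm]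

lemma gMink_qdot_qdot (χ θ : Fin 2 → ℍ) :
    gMink (qdot ψ φ) (qdot χ θ) =
      ⟪ψ 0 * star (φ 1) + φ 0 * star (ψ 1), χ 0 * star (θ 1) + θ 0 * star (χ 1)⟫ -
        2 * (⟪ψ 1, φ 1⟫ * ⟪χ 0, θ 0⟫ + ⟪ψ 0, φ 0⟫ * ⟪χ 1, θ 1⟫) := by
  simp only [gMink_eq, qdot_eq, of_apply, cons_val', cons_val_zero, cons_val_one,
    empty_val', cons_val_fin_one, Quaternion.inner_def,
    Quaternion.re_mul, Quaternion.imI_mul, Quaternion.imJ_mul, Quaternion.imK_mul,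
    Quaternion.re_add, Quaternion.imI_add, Quaternion.imJ_add, Quaternion.imK_add,
    Quaternion.re_neg, Quaternion.imI_neg, Quaternion.imJ_neg, Quaternion.imK_neg,
    Quaternion.re_star, Quaternion.imI_star, Quaternion.imJ_star, Quaternion.imK_star]
  ring

end qdot

theorem gMink_qdot_three_psi (ψ φ χ θ : Fin 2 → ℍ) :
    gMink (qdot ψ φ) (qdot χ θ) + gMink (qdot ψ χ) (qdot φ θ) +
      gMink (qdot ψ θ) (qdot φ χ) = 0 := by
  simp only [gMink_qdot_qdot, inner_add_left, inner_add_right]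
  have comp := Quaternion.inner_mul_star_add_inner_mul_star
  linear_combination comp (ψ 0) (φ 0) (χ 1) (θ 1) + comp (ψ 0) (χ 0) (φ 1) (θ 1) +
    comp (ψ 0) (θ 0) (φ 1) (χ 1) + comp (φ 0) (χ 0) (ψ 1) (θ 1) +
    comp (φ 0) (θ 0) (ψ 1) (χ 1) + comp (χ 0) (θ 0) (ψ 1) (φ 1) +
    real_inner_comm (φ 0 * star (θ 1)) (χ 0 * star (ψ 1)) +
    real_inner_comm (φ 0 * star (χ 1)) (θ 0 * star (ψ 1)) +
    real_inner_comm (χ 0 * star (φ 1)) (θ 0 * star (ψ 1))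

lemma gMink_qdot_basis_self_eq_one : gMink (qdot ![1, 0] ![0, 1]) (qdot ![1, 0] ![0, 1]) = 1 := by
  simp [gMink_qdot_qdot]

/-- In the supertranslation algebra `𝒯 = V ⊕ S₊` over ℍ, the even `(1,2)`-form
`α(ψ, φ, A) = g(ψ·φ, A)` is a nontrivial 3-cocycle valued in the trivial
representation ℝ.  Closedness `dα = 0` is the polarized 3-ψ's rule: the totally
symmetrized pairing `g(ψ·φ, χ·θ) + g(ψ·χ, φ·θ) + g(ψ·θ, φ·χ)` vanishes.
Nontriviality: there is no 2-cochain `θ` with `dθ = α`; since only the `(2,0)`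
component `ω` of `θ` can contribute, this says there is no antisymmetric bilinear
`ω` on `V` with `α(ψ, φ, A) = -ω(ψ·φ, A)` for all spinors `ψ, φ` and vectors `A`. -/
theorem alpha_is_nontrivial_three_cocycle :
    (∀ ψ φ χ θ : Fin 2 → Quaternion ℝ,
      gMink (qdot ψ φ) (qdot χ θ) + gMink (qdot ψ χ) (qdot φ θ) +
        gMink (qdot ψ θ) (qdot φ χ) = 0) ∧
    ¬ ∃ ω : Matrix (Fin 2) (Fin 2) (Quaternion ℝ) →
        Matrix (Fin 2) (Fin 2) (Quaternion ℝ) → ℝ,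
      (∀ A B : Matrix (Fin 2) (Fin 2) (Quaternion ℝ),
        A.IsHermitian → B.IsHermitian → ω A B = -ω B A) ∧
      (∀ (ψ φ : Fin 2 → Quaternion ℝ) (A : Matrix (Fin 2) (Fin 2) (Quaternion ℝ)),
        A.IsHermitian → gMink (qdot ψ φ) A = -ω (qdot ψ φ) A) := by
  refine ⟨gMink_qdot_three_psi, ?_⟩
  rintro ⟨ω, hskew, hcob⟩
  have hA := qdot_isHermitian ![1, 0] ![0, 1]
  linarith [hcob ![1, 0] ![0, 1] _ hA, hskew _ _ hA hA, gMink_qdot_basis_self_eq_one]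
end
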